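/- If x ∈ E, then the point (x, f(x)) has a neighbourhood basis in the graph G consisting of sets that are clopen in G (equivalently, the small inductive dimension of G at (x, f(x)) is 0). -/
import Mathlib


open Set Topology

/-- The Cantor space `2^ℕ`, with coordinates indexed by the positive integers. -/
abbrev Cant : Type := ℕ+ → Bool

/-- The support of a point of the Cantor space, as a set of (positive) natural numbers. -/
def ksupp (x : Cant) : Set ℕ := {i | ∃ h : 0 < i, x ⟨i, h⟩ = true}

open scoped Classical in
/-- Kuratowski's function `f(x) = Σ_j (−1)^{c_x(j)} 2^{−j}`, where `c_x` enumerates the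
support of `x` in increasing order; here the summation index `j : ℕ` is the 0-based
version of the paper's 1-based position index, so the weight is `2^{−(j+1)}`. -/
noncomputable def kf (x : Cant) : ℝ :=
  ∑' j : ℕ, if (ksupp x).Infinite ∨ j < (ksupp x).ncard then
    (-1 : ℝ) ^ (Nat.nth (· ∈ ksupp x) j) * (2 : ℝ) ^ (-(j + 1 : ℤ)) else 0

open scoped Classical in
noncomputable def kterm (x : Cant) (j : ℕ) : ℝ :=
  if (ksupp x).Infinite ∨ j < (ksupp x).ncard then
    (-1 : ℝ) ^ (Nat.nth (· ∈ ksupp x) j) * (2 : ℝ) ^ (-(j + 1 : ℤ)) else 0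

lemma kf_eq (x : Cant) : kf x = ∑' j, kterm x j := rfl

lemma two_zpow_eq (j : ℕ) : (2 : ℝ) ^ (-(j + 1 : ℤ)) = (1/2:ℝ)^(j+1) := by
  rw [show (-(j+1:ℤ)) = -((j+1:ℕ):ℤ) by push_cast; ring, zpow_neg, zpow_natCast, one_div,
    inv_pow]

lemma kterm_abs_le (x : Cant) (j : ℕ) : |kterm x j| ≤ (1/2:ℝ)^(j+1) := by
  unfold kterm
  split_ifs
  · rw [abs_mul, abs_pow, abs_neg, abs_one, one_pow, one_mul, two_zpow_eq,
      abs_of_pos (by positivity)]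
  · norm_num

lemma summable_half : Summable (fun j : ℕ => (1/2:ℝ)^(j+1)) := by
  have := (summable_geometric_of_lt_one (by norm_num : (0:ℝ) ≤ 1/2) (by norm_num)).mul_left (1/2)
  simpa [pow_succ, mul_comm] using this

lemma kterm_summable (x : Cant) : Summable (kterm x) :=
  Summable.of_abs (Summable.of_nonneg_of_le (fun j => abs_nonneg _) (kterm_abs_le x) summable_half)

lemma kf_dist (x y : Cant) (k : ℕ) (h : ∀ j < k, kterm x j = kterm y j) :
    |kf x - kf y| ≤ 2 * (1/2:ℝ)^k := by
  have hsx := kterm_summable x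
  have hsy := kterm_summable y
  set b : ℕ → ℝ := fun j => if j < k then 0 else (1/2:ℝ)^j with hb
  have hble : ∀ j, |kterm x j - kterm y j| ≤ b j := by
    intro j
    by_cases hj : j < k
    · simp [hb, hj, h j hj]
    · simp only [hb, if_neg hj]
      calc |kterm x j - kterm y j| ≤ |kterm x j| + |kterm y j| := abs_sub _ _
        _ ≤ (1/2:ℝ)^(j+1) + (1/2:ℝ)^(j+1) := add_le_add (kterm_abs_le x j) (kterm_abs_le y j)
        _ = (1/2:ℝ)^j := by ring
  have hbsum : Summable b := by
    refine Summable.of_nonneg_of_le (fun j => ?_) (fun j => ?_)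
      (summable_geometric_of_lt_one (r := 1/2) (by norm_num) (by norm_num))
    · rw [hb]; dsimp only; split_ifs <;> positivity
    · rw [hb]; dsimp only; split_ifs
      · positivity
      · exact le_refl _
  have habs : Summable (fun j => |kterm x j - kterm y j|) :=
    Summable.of_nonneg_of_le (fun j => abs_nonneg _) hble hbsum
  have h1 : |kf x - kf y| ≤ ∑' j, |kterm x j - kterm y j| := by
    rw [kf_eq, kf_eq, ← Summable.tsum_sub hsx hsy]
    simpa [Real.norm_eq_abs] using norm_tsum_le_tsum_norm
      (f := fun j => kterm x j - kterm y j) (by simpa [Real.norm_eq_abs] using habs)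
  have h2 : ∑' j, |kterm x j - kterm y j| ≤ ∑' j, b j := Summable.tsum_le_tsum hble habs hbsum
  have h3 : ∑' j, b j = 2 * (1/2:ℝ)^k := by
    have hsat := Summable.sum_add_tsum_nat_add (f := b) k hbsum
    have hz : ∑ i ∈ Finset.range k, b i = 0 := by
      apply Finset.sum_eq_zero; intro i hi
      simp [hb, Finset.mem_range.mp hi]
    have htail : (fun i : ℕ => b (i + k)) = fun i : ℕ => (1/2:ℝ)^k * (1/2:ℝ)^i := by
      funext i; simp [hb, Nat.not_lt.mpr (Nat.le_add_left k i), pow_add, mul_comm]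
    rw [hz, zero_add, htail] at hsat
    rw [← hsat, tsum_mul_left, tsum_geometric_of_lt_one (by norm_num) (by norm_num)]
    norm_num; ring
  linarith

open scoped Classical in
lemma kterm_agree (x y : Cant) (hx : (ksupp x).Infinite) (m : ℕ)
    (hagree : ∀ i : ℕ+, (i:ℕ) ≤ m → y i = x i) (j : ℕ)
    (hj : Nat.nth (· ∈ ksupp x) j ≤ m) : kterm x j = kterm y j := by
  set p : ℕ → Prop := (· ∈ ksupp x) with hp
  set q : ℕ → Prop := (· ∈ ksupp y) with hq
  have hpx : (setOf p).Infinite := hx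
  have hiff : ∀ n ≤ m, (q n ↔ p n) := by
    intro n hn
    exact exists_congr fun h => by rw [hagree ⟨n, h⟩ hn]
  set n := Nat.nth p j with hn
  have hpn : p n := Nat.nth_mem_of_infinite hpx j
  have hqn : q n := (hiff n hj).mpr hpn
  have hcnt : Nat.count q n = Nat.count p n := by
    rw [Nat.count_eq_card_filter_range, Nat.count_eq_card_filter_range]
    congr 1
    apply Finset.filter_congr
    intro i hi
    simpa using hiff i (le_of_lt (lt_of_lt_of_le (Finset.mem_range.mp hi) hj))
  have hcp : Nat.count p n = j := Nat.count_nth (fun hf => absurd hf hpx)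
  have hnth : Nat.nth q j = n := by
    have h0 := Nat.nth_count hqn
    rwa [hcnt, hcp] at h0
  have hcond : (ksupp y).Infinite ∨ j < (ksupp y).ncard := by
    by_cases hyi : (ksupp y).Infinite
    · exact Or.inl hyi
    right
    have hfin : (ksupp y).Finite := Set.not_infinite.mp hyi
    have hq1 : Nat.count q (n+1) = j + 1 := by rw [Nat.count_succ, hcnt, hcp, if_pos hqn]
    have hsub : ↑((Finset.range (n+1)).filter q) ⊆ ksupp y := by
      intro i hi
      simp only [Finset.coe_filter, Set.mem_setOf_eq] at hi
      exact hi.2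
    calc j < j+1 := Nat.lt_succ_self j
      _ = ((Finset.range (n+1)).filter q).card := by
          rw [← hq1, Nat.count_eq_card_filter_range]
      _ = (↑((Finset.range (n+1)).filter q) : Set ℕ).ncard := (Set.ncard_coe_finset _).symm
      _ ≤ (ksupp y).ncard := Set.ncard_le_ncard hsub hfin
  unfold kterm
  rw [if_pos (Or.inl hx), if_pos hcond]
  rw [show Nat.nth (· ∈ ksupp y) j = Nat.nth q j from rfl, hnth, hn, hp]

/-- If `x ∈ E` then the point `(x, f(x))` has a neighbourhood basis in the graph `G`
of Kuratowski's function consisting of sets clopen in `G`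
(i.e. `ind_{(x,f(x))} G = 0`). -/
theorem graph_kf_clopen_basis_at_E (x : Cant) (hx : (ksupp x).Infinite)
    (N : Set {p : Cant × ℝ // p.2 = kf p.1}) (hN : N ∈ 𝓝 (⟨(x, kf x), rfl⟩ : {p : Cant × ℝ // p.2 = kf p.1})) :
    ∃ U : Set {p : Cant × ℝ // p.2 = kf p.1},
      IsClopen U ∧ (⟨(x, kf x), rfl⟩ : {p : Cant × ℝ // p.2 = kf p.1}) ∈ U ∧ U ⊆ N := by
  -- unpack the neighbourhood
  rw [nhds_subtype_eq_comap] at hN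
  obtain ⟨T, hT, hTN⟩ := Filter.mem_comap.mp hN
  rw [nhds_prod_eq] at hT
  obtain ⟨A, hA, B, hB, hAB⟩ := Filter.mem_prod_iff.mp hT
  rw [nhds_pi] at hA
  obtain ⟨I, hIfin, t, ht, hIt⟩ := Filter.mem_pi.mp hA
  obtain ⟨ε, hε, hball⟩ := Metric.mem_nhds_iff.mp hB
  -- choose k
  obtain ⟨k₀, hk₀⟩ := exists_pow_lt_of_lt_one (half_pos hε) (by norm_num : (1/2:ℝ) < 1)
  set M : ℕ := hIfin.toFinset.sup (fun i => (i : ℕ)) with hM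
  set k : ℕ := max k₀ M with hk
  have hεk : 2 * (1/2:ℝ)^k < ε := by
    have h1 : (1/2:ℝ)^k ≤ (1/2:ℝ)^k₀ :=
      pow_le_pow_of_le_one (by norm_num) (by norm_num) (le_max_left _ _)
    linarith
  set m : ℕ := Nat.nth (· ∈ ksupp x) k with hm
  have hkm : k ≤ m := (Nat.nth_strictMono hx).le_apply
  -- the clopen set
  set U : Set {p : Cant × ℝ // p.2 = kf p.1} :=
    {s | ∀ i : ℕ+, (i:ℕ) ≤ m → s.1.1 i = x i} with hU
  refine ⟨U, ?_, fun i _ => rfl, ?_⟩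
  · have : U = ⋂ i ∈ {i : ℕ+ | (i:ℕ) ≤ m}, {s : {p : Cant × ℝ // p.2 = kf p.1} | s.1.1 i = x i} := by
      ext s; simp [hU]
    rw [this]
    refine Set.Finite.isClopen_biInter ?_ (fun i _ => ?_)
    · have : {i : ℕ+ | (i:ℕ) ≤ m} ⊆ (Set.Iic (m : ℕ)).preimage (fun i : ℕ+ => (i:ℕ)) := by
        intro i hi; exact hi
      exact Set.Finite.subset (Set.Finite.preimage (fun a _ b _ h => PNat.coe_injective h)
        (Set.finite_Iic _)) this
    · exact (isClopen_discrete {x i}).preimage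
        ((continuous_apply i).comp (continuous_fst.comp continuous_subtype_val))
  · intro s hs
    apply hTN
    apply hAB
    obtain ⟨⟨y, r⟩, hr⟩ := s
    have hr' : r = kf y := hr
    have hyx : ∀ i : ℕ+, (i:ℕ) ≤ m → y i = x i := hs
    constructor
    · -- y ∈ A
      apply hIt
      intro i hi
      have him : (i:ℕ) ≤ m := le_trans (le_trans (Finset.le_sup (f := fun i : ℕ+ => (i:ℕ))
        (hIfin.mem_toFinset.mpr hi)) (le_max_right k₀ M)) hkm
      rw [show ((y, r).1 : Cant) i = y i from rfl, hyx i him]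
      exact mem_of_mem_nhds (ht i)
    · -- r ∈ B
      apply hball
      have hd : |kf x - kf y| ≤ 2 * (1/2:ℝ)^k := by
        apply kf_dist
        intro j hj
        apply kterm_agree x y hx m hyx
        exact le_of_lt ((Nat.nth_strictMono hx) hj)
      simp only [Metric.mem_ball, Real.dist_eq, hr']
      rw [abs_sub_comm]
      linarith
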